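/- arXiv:1807.08903 — 2 statements merged into one kernel-verified Lean document; each statement's English description precedes it below -/
import Mathlib

section
/- Let a > 0, c > 0, τ ≥ 0, and let f(ρ) = (1/2)·√(a/π)·ρ^(-3/2)·exp(-a/(4ρ)). Set a† = τ/c + a/4. Then for any 0 < P_low ≤ P_up, ∫_{P_low}^{P_up} exp(-τ/(cρ)) f(ρ) dρ = √(a/(π a†)) · ∫_{√(a†/P_up)}^{√(a†/P_low)} exp(-t²) dt. -/
/-!
Combining the two exponentials, the integrand is `(1/2)·√(a/π)·ρ^(-3/2)·exp(-a†/ρ)`. The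
substitution `t = √(a†/ρ)` has `dt = -(√a†/2)·ρ^(-3/2) dρ`, which absorbs the power of `ρ`
and turns `exp(-a†/ρ)` into the Gaussian `exp(-t²)`.
-/

open MeasureTheory Real intervalIntegral Set

lemma sqrt_div_eq_mul_rpow {A ρ : ℝ} (hρ : 0 < ρ) :
    √(A / ρ) = √A * ρ ^ (-(1 : ℝ) / 2) := by
  rw [sqrt_div' _ hρ.le, sqrt_eq_rpow ρ, neg_div, rpow_neg hρ.le, div_eq_mul_inv]

lemma hasDerivAt_sqrt_const_div {A ρ : ℝ} (hρ : 0 < ρ) :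
    HasDerivAt (fun ρ => √(A / ρ)) (-(√A / 2) * ρ ^ (-(3 : ℝ) / 2)) ρ := by
  have hrpow : HasDerivAt (fun ρ => √A * ρ ^ (-(1 : ℝ) / 2))
      (√A * ((-(1 : ℝ) / 2) * ρ ^ (-(1 : ℝ) / 2 - 1))) ρ :=
    (hasDerivAt_rpow_const (Or.inl hρ.ne')).const_mul _
  rw [show -(1 : ℝ) / 2 - 1 = -(3 : ℝ) / 2 by norm_num] at hrpow
  refine (hrpow.congr_of_eventuallyEq ?_).congr_deriv (by ring)
  filter_upwards [Ioi_mem_nhds hρ] with x hx using sqrt_div_eq_mul_rpow hx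

lemma integral_rpow_neg_three_halves_mul_comp_sqrt_div {h : ℝ → ℝ} (hh : Continuous h)
    {A p q : ℝ} (hA : 0 < A) (hp : 0 < p) (hpq : p ≤ q) :
    ∫ ρ in p..q, ρ ^ (-(3 : ℝ) / 2) * h √(A / ρ) =
      2 / √A * ∫ t in √(A / q)..√(A / p), h t := by
  have hpos : ∀ ρ ∈ uIcc p q, 0 < ρ := fun ρ hρ =>
    hp.trans_le (by rw [uIcc_of_le hpq] at hρ; exact hρ.1)
  have hsubst := integral_comp_mul_deriv
    (fun ρ hρ => hasDerivAt_sqrt_const_div (A := A) (hpos ρ hρ))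
    (ContinuousOn.mul continuousOn_const fun ρ hρ =>
      (continuousAt_rpow_const _ _ (Or.inl (hpos ρ hρ).ne')).continuousWithinAt) hh
  have hsqrtA : 0 < √A := sqrt_pos.mpr hA
  rw [integral_symm (√(A / p)), ← hsubst, ← intervalIntegral.integral_neg,
    ← intervalIntegral.integral_const_mul]
  refine integral_congr fun ρ _ => ?_
  simp only [Function.comp]
  field_simp

/-- Coverage probability in closed form (path-loss exponent 4): for `a, c > 0`, `τ ≥ 0`,
`a† = τ/c + a/4`, and `0 < P_low ≤ P_up`,
`∫_{P_low}^{P_up} exp (-τ/(cρ)) f(ρ) dρ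
  = √(a/(π a†)) · ∫_{√(a†/P_up)}^{√(a†/P_low)} exp (-t²) dt`
where `f(ρ) = (1/2)·√(a/π)·ρ^(-3/2)·exp (-a/(4ρ))`. -/
theorem stmt_3 (a c τ : ℝ) (ha : 0 < a) (hc : 0 < c) (hτ : 0 ≤ τ)
    (Plow Pup : ℝ) (hPlow : 0 < Plow) (hle : Plow ≤ Pup) :
    (∫ ρ in Plow..Pup,
        Real.exp (-(τ / (c * ρ))) *
          ((1 / 2) * Real.sqrt (a / Real.pi) * ρ ^ (-(3 : ℝ) / 2) *
            Real.exp (-(a / (4 * ρ))))) =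
      Real.sqrt (a / (Real.pi * (τ / c + a / 4))) *
        ∫ t in Real.sqrt ((τ / c + a / 4) / Pup)..Real.sqrt ((τ / c + a / 4) / Plow),
          Real.exp (-t ^ 2) := by
  set A := τ / c + a / 4 with hAdef
  have hA : 0 < A := by positivity
  have hintegrand : ∀ ρ ∈ uIcc Plow Pup,
      exp (-(τ / (c * ρ))) * (1 / 2 * √(a / π) * ρ ^ (-(3 : ℝ) / 2) * exp (-(a / (4 * ρ)))) =
        1 / 2 * √(a / π) * (ρ ^ (-(3 : ℝ) / 2) * exp (-√(A / ρ) ^ 2)) := by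
    intro ρ hρ
    have hρ : 0 < ρ := hPlow.trans_le (by rw [uIcc_of_le hle] at hρ; exact hρ.1)
    rw [sq_sqrt (by positivity), hAdef]
    have hexp : exp (-(τ / (c * ρ))) * exp (-(a / (4 * ρ))) = exp (-((τ / c + a / 4) / ρ)) := by
      rw [← exp_add]; congr 1; field_simp; ring
    rw [← hexp]; ring
  rw [integral_congr hintegrand, intervalIntegral.integral_const_mul,
    integral_rpow_neg_three_halves_mul_comp_sqrt_div (h := fun t => exp (-t ^ 2)) (by fun_prop)
      hA hPlow hle,
    ← mul_assoc,
    sqrt_div' _ (by positivity : 0 ≤ π * A), sqrt_div' _ pi_pos.le, sqrt_mul pi_pos.le]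
  have hsqrtA : 0 < √A := sqrt_pos.mpr hA
  field_simp
end

section
/- Let a > 0. Then for every ρ > 0, (2/(aπ))·∫₀^∞ exp(-(ρ/a)·v²)·v·sin(v) dv = (1/2)·√(a/π)·ρ^{-3/2}·exp(-a/(4ρ)). -/
open MeasureTheory Real
open Filter Complex Set

lemma cos_gaussian_line {b : ℝ} (hb : 0 < b) :
    ∫ x : ℝ, Real.cos x * Real.exp (-b * x ^ 2) =
      Real.sqrt (Real.pi / b) * Real.exp (-(1 / (4 * b))) := by
  have hb' : 0 < ((b : ℂ)).re := by simpa using hb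
  have h := fourierIntegral_gaussian hb' 1
  have hint : Integrable fun x : ℝ =>
      Complex.exp (Complex.I * 1 * x) * Complex.exp (-(b : ℂ) * x ^ 2) := by
    refine (integrable_cexp_quadratic hb' Complex.I 0).congr
      (Eventually.of_forall fun x => ?_)
    dsimp only
    rw [← Complex.exp_add]; congr 1; ring
  have hpt : ∀ x : ℝ, (Complex.exp (Complex.I * 1 * x) * Complex.exp (-(b : ℂ) * x ^ 2)).re
      = Real.cos x * Real.exp (-b * x ^ 2) := by
    intro x
    have e1 : Complex.I * 1 * (x : ℂ) = (x : ℂ) * Complex.I := by ring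
    have e2 : -(b : ℂ) * (x : ℂ) ^ 2 = ((-b * x ^ 2 : ℝ) : ℂ) := by push_cast; ring
    rw [e1, e2, ← Complex.ofReal_exp, Complex.exp_mul_I, ← Complex.ofReal_cos,
      ← Complex.ofReal_sin]
    simp [add_mul, Complex.add_re, Complex.mul_re, -Complex.ofReal_exp, Complex.cos_ofReal_re]
  calc ∫ x : ℝ, Real.cos x * Real.exp (-b * x ^ 2)
      = ∫ x : ℝ, (Complex.exp (Complex.I * 1 * x) * Complex.exp (-(b : ℂ) * x ^ 2)).re := by
        simp_rw [hpt]
    _ = (∫ x : ℝ, Complex.exp (Complex.I * 1 * x) * Complex.exp (-(b : ℂ) * x ^ 2)).re :=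
        integral_re hint
    _ = Real.sqrt (Real.pi / b) * Real.exp (-(1 / (4 * b))) := by
        rw [h]
        have e3 : ((Real.pi : ℂ)) / (b : ℂ) = ((Real.pi / b : ℝ) : ℂ) := by push_cast; ring
        have e4 : -(1 : ℂ) ^ 2 / (4 * (b : ℂ)) = ((-(1 / (4 * b)) : ℝ) : ℂ) := by
          push_cast; field_simp
        rw [e3, e4, ← Complex.ofReal_exp,
          show ((1 / 2 : ℂ)) = ((1 / 2 : ℝ) : ℂ) by norm_num,
          ← Complex.ofReal_cpow (by positivity), ← Complex.ofReal_mul, Complex.ofReal_re,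
          ← Real.sqrt_eq_rpow]

lemma integrable_cos_gaussian {b : ℝ} (hb : 0 < b) :
    Integrable fun x : ℝ => Real.cos x * Real.exp (-b * x ^ 2) := by
  refine (integrable_exp_neg_mul_sq hb).mono' ?_ (Eventually.of_forall fun x => ?_)
  · exact (Real.continuous_cos.mul
      ((continuous_const.mul (continuous_pow 2)).rexp)).aestronglyMeasurable
  · rw [norm_mul, Real.norm_eq_abs, Real.norm_eq_abs, _root_.abs_of_nonneg (Real.exp_pos _).le]
    nlinarith [Real.abs_cos_le_one x, Real.exp_pos (-b * x ^ 2), abs_nonneg (Real.cos x)]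

lemma cos_gaussian_Ioi {b : ℝ} (hb : 0 < b) :
    ∫ x in Ioi (0 : ℝ), Real.cos x * Real.exp (-b * x ^ 2) =
      (1 / 2) * (Real.sqrt (Real.pi / b) * Real.exp (-(1 / (4 * b)))) := by
  have hi := integrable_cos_gaussian hb
  have hsplit := intervalIntegral.integral_Iic_add_Ioi (μ := volume) (b := (0 : ℝ)) hi.integrableOn hi.integrableOn
  have heven : (∫ x in Iic (0 : ℝ), Real.cos x * Real.exp (-b * x ^ 2)) =
      ∫ x in Ioi (0 : ℝ), Real.cos x * Real.exp (-b * x ^ 2) := by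
    have hc := integral_comp_neg_Ioi (c := 0)
      (f := fun x : ℝ => Real.cos x * Real.exp (-b * x ^ 2))
    rw [neg_zero] at hc
    rw [← hc]
    refine setIntegral_congr_fun measurableSet_Ioi fun x _ => ?_
    simp [neg_sq]
  rw [cos_gaussian_line hb] at hsplit
  linarith

lemma sin_gaussian_Ioi {b : ℝ} (hb : 0 < b) :
    ∫ v in Ioi (0 : ℝ), Real.exp (-b * v ^ 2) * v * Real.sin v =
      (1 / (2 * b)) * ∫ x in Ioi (0 : ℝ), Real.cos x * Real.exp (-b * x ^ 2) := by
  have hexp : ∀ v : ℝ, HasDerivAt (fun v : ℝ => Real.exp (-b * v ^ 2))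
      (Real.exp (-b * v ^ 2) * (-b * (2 * v))) v := by
    intro v
    have := HasDerivAt.exp ((hasDerivAt_pow 2 v).const_mul (-b))
    simpa [mul_comm] using this
  have hA : ∀ v : ℝ, HasDerivAt
      (fun v : ℝ => -(1 / (2 * b)) * (Real.exp (-b * v ^ 2) * Real.sin v))
      (Real.exp (-b * v ^ 2) * v * Real.sin v -
        (1 / (2 * b)) * (Real.exp (-b * v ^ 2) * Real.cos v)) v := by
    intro v
    have h2 := ((hexp v).mul (Real.hasDerivAt_sin v)).const_mul (-(1 / (2 * b)))
    have hc : (1 : ℝ) / (2 * b) * (2 * b) = 1 := by field_simp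
    have h3 : Real.exp (-b * v ^ 2) * v * Real.sin v -
        (1 / (2 * b)) * (Real.exp (-b * v ^ 2) * Real.cos v) = -(1 / (2 * b)) *
        (rexp (-b * v ^ 2) * (-b * (2 * v)) * Real.sin v +
          rexp (-b * v ^ 2) * Real.cos v) := by
      linear_combination (-(v * rexp (-b * v ^ 2) * Real.sin v)) * hc
    rw [h3]
    exact h2
  have hg1 : Integrable fun v : ℝ => Real.exp (-b * v ^ 2) * v * Real.sin v := by
    refine (integrable_mul_exp_neg_mul_sq hb).abs.mono' ?_ (Eventually.of_forall fun x => ?_)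
    · exact (((continuous_const.mul (continuous_pow 2)).rexp.mul continuous_id).mul
        Real.continuous_sin).aestronglyMeasurable
    · simp only [Real.norm_eq_abs]
      have he : |rexp (-b * x ^ 2)| = rexp (-b * x ^ 2) := abs_of_pos (Real.exp_pos _)
      rw [abs_mul, abs_mul, abs_mul, he]
      calc rexp (-b * x ^ 2) * |x| * |Real.sin x|
          ≤ rexp (-b * x ^ 2) * |x| * 1 :=
            mul_le_mul_of_nonneg_left (Real.abs_sin_le_one x) (by positivity)
        _ = |x| * rexp (-b * x ^ 2) := by ring
  have hg2 : Integrable fun v : ℝ =>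
      (1 / (2 * b)) * (Real.exp (-b * v ^ 2) * Real.cos v) := by
    refine ((integrable_cos_gaussian hb).const_mul (1 / (2 * b))).congr
      (Eventually.of_forall fun x => by ring)
  have htend : Tendsto (fun v : ℝ => -(1 / (2 * b)) * (Real.exp (-b * v ^ 2) * Real.sin v))
      atTop (nhds 0) := by
    have hb0 : Tendsto (fun v : ℝ => (1 / (2 * b)) * Real.exp (-b * v ^ 2)) atTop (nhds 0) := by
      rw [show (0 : ℝ) = (1 / (2 * b)) * 0 by ring]
      exact (Real.tendsto_exp_atBot.comp
        ((tendsto_pow_atTop two_ne_zero).const_mul_atTop_of_neg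
          (neg_lt_zero.2 hb))).const_mul _
    refine squeeze_zero_norm (fun v => ?_) hb0
    have hnorm : ‖-(1 / (2 * b)) * (rexp (-b * v ^ 2) * Real.sin v)‖
        = 1 / (2 * b) * (rexp (-b * v ^ 2) * |Real.sin v|) := by
      rw [Real.norm_eq_abs, abs_mul, abs_neg, abs_mul,
        abs_of_pos (show (0 : ℝ) < 1 / (2 * b) by positivity),
        abs_of_pos (Real.exp_pos _)]
    rw [hnorm]
    calc 1 / (2 * b) * (rexp (-b * v ^ 2) * |Real.sin v|)
        ≤ 1 / (2 * b) * (rexp (-b * v ^ 2) * 1) := by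
          gcongr
          exact Real.abs_sin_le_one v
      _ = 1 / (2 * b) * rexp (-b * v ^ 2) := by ring
  have key : ∫ v in Ioi (0 : ℝ), (Real.exp (-b * v ^ 2) * v * Real.sin v -
      (1 / (2 * b)) * (Real.exp (-b * v ^ 2) * Real.cos v)) =
      0 - -(1 / (2 * b)) * (Real.exp (-b * 0 ^ 2) * Real.sin 0) :=
    integral_Ioi_of_hasDerivAt_of_tendsto
      ((hA 0).continuousAt.continuousWithinAt) (fun x _ => hA x)
      ((hg1.sub hg2).integrableOn) htend
  rw [Real.sin_zero] at key
  have hsub : (∫ v in Ioi (0 : ℝ), (Real.exp (-b * v ^ 2) * v * Real.sin v -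
      (1 / (2 * b)) * (Real.exp (-b * v ^ 2) * Real.cos v))) =
      (∫ v in Ioi (0 : ℝ), Real.exp (-b * v ^ 2) * v * Real.sin v) -
      ∫ v in Ioi (0 : ℝ), (1 / (2 * b)) * (Real.exp (-b * v ^ 2) * Real.cos v) :=
    integral_sub hg1.integrableOn hg2.integrableOn
  rw [hsub] at key
  have hmul : (∫ v in Ioi (0 : ℝ), (1 / (2 * b)) * (Real.exp (-b * v ^ 2) * Real.cos v)) =
      (1 / (2 * b)) * ∫ x in Ioi (0 : ℝ), Real.cos x * Real.exp (-b * x ^ 2) := by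
    rw [integral_const_mul]
    congr 1
    exact setIntegral_congr_fun measurableSet_Ioi fun x _ => by ring
  rw [hmul] at key
  have : (0:ℝ) - -(1 / (2 * b)) * (Real.exp (-b * 0 ^ 2) * 0) = 0 := by ring
  rw [this] at key
  linarith

/-- The oscillatory-integral step of the Bromwich inversion: for `a > 0` and `ρ > 0`,
`(2/(aπ))·∫₀^∞ exp (-(ρ/a) v²)·v·sin v dv = (1/2)·√(a/π)·ρ^{-3/2}·exp (-a/(4ρ))`. -/
theorem stmt_15 (a ρ : ℝ) (ha : 0 < a) (hρ : 0 < ρ) :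
    (2 / (a * Real.pi)) *
        ∫ v in Set.Ioi (0 : ℝ), Real.exp (-(ρ / a) * v ^ 2) * v * Real.sin v =
      (1 / 2) * Real.sqrt (a / Real.pi) * ρ ^ (-(3 : ℝ) / 2) * Real.exp (-(a / (4 * ρ))) := by
  have hb : 0 < ρ / a := div_pos hρ ha
  rw [sin_gaussian_Ioi hb, cos_gaussian_Ioi hb]
  have hexp : -(1 / (4 * (ρ / a))) = -(a / (4 * ρ)) := by
    field_simp
  rw [hexp]
  have hsq : Real.sqrt (Real.pi / (ρ / a)) = Real.sqrt Real.pi * Real.sqrt a / Real.sqrt ρ := by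
    rw [div_div_eq_mul_div, Real.sqrt_div (by positivity), Real.sqrt_mul Real.pi_pos.le]
  have h1 : Real.sqrt (a / Real.pi) = Real.sqrt a / Real.sqrt Real.pi :=
    Real.sqrt_div ha.le _
  have h2 : ρ ^ (-(3 : ℝ) / 2) = 1 / (ρ * Real.sqrt ρ) := by
    rw [show (-(3 : ℝ) / 2) = -(3 / 2) by norm_num, Real.rpow_neg hρ.le,
      show ((3 : ℝ) / 2) = 1 + 1 / 2 by norm_num, Real.rpow_add hρ, Real.rpow_one,
      ← Real.sqrt_eq_rpow, one_div]
  rw [hsq, h1, h2]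
  have hπ : Real.sqrt Real.pi * Real.sqrt Real.pi = Real.pi :=
    Real.mul_self_sqrt Real.pi_pos.le
  have hρ2 : Real.sqrt ρ * Real.sqrt ρ = ρ := Real.mul_self_sqrt hρ.le
  have ha2 : Real.sqrt a * Real.sqrt a = a := Real.mul_self_sqrt ha.le
  have hπ0 : 0 < Real.sqrt Real.pi := Real.sqrt_pos.2 Real.pi_pos
  have hρ0 : 0 < Real.sqrt ρ := Real.sqrt_pos.2 hρ
  have ha0 : 0 < Real.sqrt a := Real.sqrt_pos.2 ha
  generalize rexp (-(a / (4 * ρ))) = E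
  field_simp
  linear_combination E * hπ
end
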